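/- In the field F_{16} = F_{2^4}, there exists a primitive element α such that α + α^{-1} is also primitive and Tr_{F_{16}/F_2}(α) = a, for every a ∈ F_2. -/

import Mathlib

/-!
Let `g` be a primitive element of `𝔽₁₆` whose minimal polynomial is `X⁴ + X + 1`; it exists
because the primitive 15th roots of unity are the roots of `X⁴ + X + 1` and of its reciprocal
`X⁴ + X³ + 1`. Reducing powers modulo `g⁴ = g + 1` gives `g + g⁻¹ = g⁷` and
`g⁷ + g⁻⁷ = g¹¹`, and 7 and 11 are prime to 15. So both `g` and `g⁷` are primitive elements
with primitive `α + α⁻¹`, and their traces `α + α² + α⁴ + α⁸` are `0` and `1` respectively.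
-/

section CharTwo

variable {F : Type*} [Field F] [CharP F 2] {g : F}

theorem IsPrimitiveRoot.pow_four_eq_add_one_or_pow_four_eq_pow_three_add_one
    (hg : IsPrimitiveRoot g 15) : g ^ 4 = g + 1 ∨ g ^ 4 = g ^ 3 + 1 := by
  have h3 : g ^ 3 ≠ 1 := hg.pow_ne_one_of_pos_of_lt (by norm_num) (by norm_num)
  have h5 : g ^ 5 ≠ 1 := hg.pow_ne_one_of_pos_of_lt (by norm_num) (by norm_num)
  have hΦ3 : g ^ 2 + g + 1 ≠ 0 := fun h ↦ h3 (by linear_combination (g - 1) * h)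
  have hΦ15 : g ^ 8 - g ^ 7 + g ^ 5 - g ^ 4 + g ^ 3 - g + 1 = 0 := by
    have hX15 : (g ^ 5 - 1) * ((g ^ 2 + g + 1) *
        (g ^ 8 - g ^ 7 + g ^ 5 - g ^ 4 + g ^ 3 - g + 1)) = 0 := by
      linear_combination hg.pow_eq_one
    exact (mul_eq_zero.1 ((mul_eq_zero.1 hX15).resolve_left (sub_ne_zero.2 h5))).resolve_left hΦ3
  have hfactor : (g ^ 4 + g + 1) * (g ^ 4 + g ^ 3 + 1) = 0 := by grind
  rcases mul_eq_zero.1 hfactor with h | h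
  · left; grind
  · right; grind

theorem IsPrimitiveRoot.exists_isPrimitiveRoot_fifteen_pow_four_eq_add_one
    (hg : IsPrimitiveRoot g 15) : ∃ α : F, IsPrimitiveRoot α 15 ∧ α ^ 4 = α + 1 := by
  rcases hg.pow_four_eq_add_one_or_pow_four_eq_pow_three_add_one with h | h
  · exact ⟨g, hg, h⟩
  · have := hg.ne_zero (by norm_num)
    exact ⟨g⁻¹, hg.inv, by grind⟩

theorem add_inv_eq_pow_seven_of_pow_four_eq_add_one (h : g ^ 4 = g + 1) :
    g + g⁻¹ = g ^ 7 := by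
  grind

theorem pow_seven_add_inv_eq_pow_eleven_of_pow_four_eq_add_one (h : g ^ 4 = g + 1) :
    g ^ 7 + (g ^ 7)⁻¹ = g ^ 11 := by
  grind

theorem add_pow_two_add_pow_four_add_pow_eight_eq_zero_of_pow_four_eq_add_one
    (h : g ^ 4 = g + 1) : g + g ^ 2 + g ^ 4 + g ^ 8 = 0 := by
  grind

theorem pow_seven_add_pow_two_add_pow_four_add_pow_eight_eq_one_of_pow_four_eq_add_one
    (h : g ^ 4 = g + 1) : g ^ 7 + (g ^ 7) ^ 2 + (g ^ 7) ^ 4 + (g ^ 7) ^ 8 = 1 := by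
  grind

end CharTwo

section FiniteField

variable {F : Type*} [Field F] [Finite F]

theorem FiniteField.exists_isPrimitiveRoot_natCard_sub_one :
    ∃ ζ : F, IsPrimitiveRoot ζ (Nat.card F - 1) := by
  obtain ⟨u, hu⟩ := IsCyclic.exists_ofOrder_eq_natCard (α := Fˣ)
  refine ⟨u, IsPrimitiveRoot.coe_units_iff.2 ?_⟩
  rw [← Nat.card_units, ← hu]
  exact IsPrimitiveRoot.orderOf u

theorem IsPrimitiveRoot.exists_pow_eq_of_ne_zero {ζ : F}
    (hζ : IsPrimitiveRoot ζ (Nat.card F - 1)) {β : F} (hβ : β ≠ 0) :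
    ∃ k : ℕ, ζ ^ k = β := by
  have : NeZero (Nat.card F - 1) := ⟨by have := Finite.one_lt_card (α := F); omega⟩
  have hβ1 : β ^ (Nat.card F - 1) = 1 := by
    rw [← Nat.card_units]
    exact congrArg Units.val (pow_card_eq_one' (x := Units.mk0 β hβ))
  obtain ⟨k, -, hk⟩ := hζ.eq_pow_of_pow_eq_one hβ1
  exact ⟨k, hk⟩

end FiniteField

theorem GaloisField.algebraMap_trace_two_four (x : GaloisField 2 4) :
    algebraMap (ZMod 2) (GaloisField 2 4) (Algebra.trace (ZMod 2) (GaloisField 2 4) x) =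
      x + x ^ 2 + x ^ 4 + x ^ 8 := by
  rw [FiniteField.algebraMap_trace_eq_sum_pow, GaloisField.finrank 2 (by norm_num), Nat.card_zmod]
  simp [Finset.sum_range_succ]

theorem primitive_pair_with_trace_F16 (a : ZMod 2) :
    ∃ α : GaloisField 2 4, α ≠ 0 ∧
      (∀ β : GaloisField 2 4, β ≠ 0 → ∃ k : ℕ, α ^ k = β) ∧
      (∀ β : GaloisField 2 4, β ≠ 0 → ∃ k : ℕ, (α + α⁻¹) ^ k = β) ∧
      Algebra.trace (ZMod 2) (GaloisField 2 4) α = a := by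
  have hcard : Nat.card (GaloisField 2 4) - 1 = 15 := by
    rw [GaloisField.card 2 4 (by norm_num)]
    norm_num
  have hprim (α : GaloisField 2 4) (hα : IsPrimitiveRoot α 15) (β : GaloisField 2 4)
      (hβ : β ≠ 0) : ∃ k : ℕ, α ^ k = β :=
    (hcard ▸ hα).exists_pow_eq_of_ne_zero hβ
  suffices ∃ α : GaloisField 2 4, IsPrimitiveRoot α 15 ∧ IsPrimitiveRoot (α + α⁻¹) 15 ∧
      α + α ^ 2 + α ^ 4 + α ^ 8 = algebraMap (ZMod 2) (GaloisField 2 4) a by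
    obtain ⟨α, hα, hα_add_inv, hα_trace⟩ := this
    refine ⟨α, hα.ne_zero (by norm_num), hprim α hα, hprim _ hα_add_inv, ?_⟩
    apply FaithfulSMul.algebraMap_injective (ZMod 2) (GaloisField 2 4)
    rw [GaloisField.algebraMap_trace_two_four, hα_trace]
  obtain ⟨ζ, hζ⟩ := FiniteField.exists_isPrimitiveRoot_natCard_sub_one (F := GaloisField 2 4)
  obtain ⟨g, hg, hg4⟩ := (hcard ▸ hζ).exists_isPrimitiveRoot_fifteen_pow_four_eq_add_one
  fin_cases a
  · refine ⟨g, hg, ?_, ?_⟩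
    · rw [add_inv_eq_pow_seven_of_pow_four_eq_add_one hg4]
      exact hg.pow_of_coprime 7 (by norm_num)
    · rw [add_pow_two_add_pow_four_add_pow_eight_eq_zero_of_pow_four_eq_add_one hg4]
      exact (map_zero _).symm
  · refine ⟨g ^ 7, hg.pow_of_coprime 7 (by norm_num), ?_, ?_⟩
    · rw [pow_seven_add_inv_eq_pow_eleven_of_pow_four_eq_add_one hg4]
      exact hg.pow_of_coprime 11 (by norm_num)
    · rw [pow_seven_add_pow_two_add_pow_four_add_pow_eight_eq_one_of_pow_four_eq_add_one hg4]
      exact (map_one _).symm
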